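/- Let n be a non-square natural number with v_2(n) ≥ 0 even. Then D_{S(n)*} = C_{S(n)*} = 3. -/

import Mathlib

/-!
Upper bound. As `n` is not a square and `v₂(n)` is even, some odd prime `p` divides `n` to an odd
power `e`. By the Chinese remainder theorem, weights `(w, 0)` reduce the problem to `ZMod (p ^ e)`.
There a non-unit term is killed by the nonzero square `p ^ (e - 1)`. For three units `a, b, c`
work modulo `p`: if `-ab` is a square the weights `b², -ab` kill `(a, b)`, and similarly for
`(b, c)`; otherwise `ac` is a square, and writing a non-square `ν = x² + y²`, the weights
`x², -ν a / b, y² a / c` kill `(a, b, c)`. Since `p` is odd, a unit of `ZMod (p ^ e)` whose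
reduction is a square is a square, so these weights lift.

Lower bound. When `v₂(n)` is even there is `c : ZMod n` such that `x² + c y² = 0` forces `y² = 0`:
take `c = p` modulo `p ^ k` for even `k`, and `c = -ν` with `ν` a non-square modulo `p` for odd
`p`; a `p`-adic descent proves both, and the Chinese remainder theorem glues them. Then the
sequence `(1, c)` has no weighted zero-sum subsequence.
-/

/-- The set of squares of units of `ZMod n`. -/
def unitSquares (n : ℕ) : Set (ZMod n) :=
  {x | ∃ u : (ZMod n)ˣ, (u : ZMod n) ^ 2 = x}

/-- The set of nonzero squares of `ZMod n`. -/
def nonzeroSquares (n : ℕ) : Set (ZMod n) :=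
  {x | x ≠ 0 ∧ ∃ y : ZMod n, y ^ 2 = x}

/-- A (nonempty) sequence is an `A`-weighted zero-sum sequence. -/
def IsWeightedZeroSum {n k : ℕ} (A : Set (ZMod n)) (x : Fin k → ZMod n) : Prop :=
  0 < k ∧ ∃ w : Fin k → ZMod n, (∀ i, w i ∈ A) ∧ ∑ i, w i * x i = 0

/-- The sequence `x` has an `A`-weighted zero-sum subsequence. -/
def HasWZSSubseq {n k : ℕ} (A : Set (ZMod n)) (x : Fin k → ZMod n) : Prop :=
  ∃ I : Finset (Fin k), I.Nonempty ∧ ∃ w : Fin k → ZMod n,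
    (∀ i ∈ I, w i ∈ A) ∧ ∑ i ∈ I, w i * x i = 0

/-- The sequence `x` has an `A`-weighted zero-sum subsequence of consecutive terms. -/
def HasConsecWZS {n k : ℕ} (A : Set (ZMod n)) (x : Fin k → ZMod n) : Prop :=
  ∃ i j : Fin k, i ≤ j ∧ ∃ w : Fin k → ZMod n,
    (∀ t ∈ Finset.Icc i j, w t ∈ A) ∧ ∑ t ∈ Finset.Icc i j, w t * x t = 0

/-- `k` is admissible for the `A`-weighted Davenport constant of `ZMod n`. -/
def DConst (n : ℕ) (A : Set (ZMod n)) (k : ℕ) : Prop :=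
  0 < k ∧ ∀ x : Fin k → ZMod n, HasWZSSubseq A x

/-- `k` is admissible for the constant `C_A` of `ZMod n`. -/
def CConst (n : ℕ) (A : Set (ZMod n)) (k : ℕ) : Prop :=
  0 < k ∧ ∀ x : Fin k → ZMod n, HasConsecWZS A x

open Finset

lemma mem_nonzeroSquares_iff {n : ℕ} {x : ZMod n} :
    x ∈ nonzeroSquares n ↔ x ≠ 0 ∧ IsSquare x := by
  simp [nonzeroSquares, isSquare_iff_exists_sq, eq_comm]

lemma hasConsecWZS_of_mul_eq_zero {n k : ℕ} {A : Set (ZMod n)} {x : Fin k → ZMod n} (i : Fin k)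
    {s : ZMod n} (hs : s ∈ A) (h : s * x i = 0) : HasConsecWZS A x :=
  ⟨i, i, le_rfl, fun _ ↦ s, by simpa using hs, by simpa using h⟩

lemma hasConsecWZS_of_adjacent {n : ℕ} {A : Set (ZMod n)} {x : Fin 3 → ZMod n} (i : Fin 2)
    {s t : ZMod n} (hs : s ∈ A) (ht : t ∈ A) (h : s * x i.castSucc + t * x i.succ = 0) :
    HasConsecWZS A x := by
  fin_cases i
  · refine ⟨0, 1, by decide, ![s, t, t], ?_, ?_⟩
    · simp [show Icc (0 : Fin 3) 1 = {0, 1} by decide, hs, ht]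
    · simpa [show Icc (0 : Fin 3) 1 = {0, 1} by decide] using h
  · refine ⟨1, 2, by decide, ![s, s, t], ?_, ?_⟩
    · simp [show Icc (1 : Fin 3) 2 = {1, 2} by decide, hs, ht]
    · simpa [show Icc (1 : Fin 3) 2 = {1, 2} by decide] using h

lemma hasConsecWZS_of_triple {n : ℕ} {A : Set (ZMod n)} {x : Fin 3 → ZMod n}
    {s t u : ZMod n} (hs : s ∈ A) (ht : t ∈ A) (hu : u ∈ A)
    (h : s * x 0 + t * x 1 + u * x 2 = 0) : HasConsecWZS A x := by
  refine ⟨0, 2, by decide, ![s, t, u], ?_, ?_⟩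
  · simp [show Icc (0 : Fin 3) 2 = {0, 1, 2} by decide, hs, ht, hu]
  · simpa [show Icc (0 : Fin 3) 2 = {0, 1, 2} by decide, add_assoc] using h

lemma HasConsecWZS.hasWZSSubseq {n k : ℕ} {A : Set (ZMod n)} {x : Fin k → ZMod n}
    (h : HasConsecWZS A x) : HasWZSSubseq A x := by
  obtain ⟨i, j, hij, w, hw, hs⟩ := h
  exact ⟨Icc i j, nonempty_Icc.mpr hij, w, hw, hs⟩

lemma CConst.dConst {n k : ℕ} {A : Set (ZMod n)} (h : CConst n A k) : DConst n A k :=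
  ⟨h.1, fun x ↦ (h.2 x).hasWZSSubseq⟩

lemma FiniteField.isSquare_mul_of_not_isSquare {F : Type*} [Field F] [Fintype F] [DecidableEq F]
    {a b : F} (ha : ¬IsSquare a) (hb : ¬IsSquare b) : IsSquare (a * b) := by
  have ha0 : a ≠ 0 := by rintro rfl; exact ha ⟨0, by simp⟩
  have hb0 : b ≠ 0 := by rintro rfl; exact hb ⟨0, by simp⟩
  rw [← quadraticChar_one_iff_isSquare (mul_ne_zero ha0 hb0), map_mul,
    quadraticChar_neg_one_iff_not_isSquare.mpr ha, quadraticChar_neg_one_iff_not_isSquare.mpr hb]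
  norm_num

theorem exists_lift_of_sum_eq_zero {R S ι : Type*} [CommRing R] [CommRing S] (φ : R →+* S)
    (hφ : Function.Surjective φ) {I : Finset ι} {t₀ : ι} (ht₀ : t₀ ∈ I) {x : ι → R}
    (hx : IsUnit (x t₀)) {w : ι → S} (h : ∑ t ∈ I, w t * φ (x t) = 0) :
    ∃ v : ι → R, (∀ t ∈ I, φ (v t) = w t) ∧ ∑ t ∈ I, v t * x t = 0 := by
  classical
  choose v hv using fun t ↦ hφ (w t)
  set r := -(∑ t ∈ I.erase t₀, v t * x t) * ↑hx.unit⁻¹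
  have hrest : ∀ t ∈ I.erase t₀, Function.update v t₀ r t = v t :=
    fun t ht ↦ Function.update_of_ne (ne_of_mem_erase ht) _ _
  refine ⟨Function.update v t₀ r, fun t ht ↦ ?_, ?_⟩
  · obtain rfl | htt := eq_or_ne t t₀
    · rw [← add_sum_erase I _ ht₀] at h
      have hu : φ ↑hx.unit⁻¹ * φ (x t) = 1 := by rw [← map_mul, hx.val_inv_mul, map_one]
      simp only [Function.update_self, r, map_mul, map_neg, map_sum, hv]
      linear_combination (-φ ↑hx.unit⁻¹) * h + w t * hu
    · rw [Function.update_of_ne htt, hv]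
  · rw [← add_sum_erase I _ ht₀, sum_congr rfl fun t ht ↦ by rw [hrest t ht],
      Function.update_self, mul_assoc, hx.val_inv_mul]
    ring

namespace ZMod

variable {p e : ℕ} [Fact p.Prime]

lemma exists_triple_weights_of_not_isSquare (hp2 : p ≠ 2) {a b c : ZMod p}
    (ha : a ≠ 0) (hb : b ≠ 0) (hc : c ≠ 0)
    (hab : ¬IsSquare (-(a * b))) (hbc : ¬IsSquare (-(b * c))) :
    ∃ s ∈ nonzeroSquares p, ∃ t ∈ nonzeroSquares p, ∃ u ∈ nonzeroSquares p,
      s * a + t * b + u * c = 0 := by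
  have hchar : ringChar (ZMod p) ≠ 2 := by rwa [ringChar_zmod_n]
  obtain ⟨ν, hν⟩ := FiniteField.exists_nonsquare hchar
  obtain ⟨x, y, hxy⟩ := sq_add_sq p ν
  have hx : x ≠ 0 := by rintro rfl; exact hν ⟨y, by rw [← hxy]; ring⟩
  have hy : y ≠ 0 := by rintro rfl; exact hν ⟨x, by rw [← hxy]; ring⟩
  refine ⟨x ^ 2, ?_, ν * -(a * b) * (b⁻¹) ^ 2, ?_, y ^ 2 * (-(a * b) * -(b * c)) * (b⁻¹ * c⁻¹) ^ 2,
    ?_, ?_⟩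
  · exact mem_nonzeroSquares_iff.mpr ⟨pow_ne_zero 2 hx, IsSquare.sq x⟩
  · refine mem_nonzeroSquares_iff.mpr ⟨?_, ?_⟩
    · have hν0 : ν ≠ 0 := by rintro rfl; exact hν ⟨0, by simp⟩
      simp [hν0, ha, hb]
    · exact (FiniteField.isSquare_mul_of_not_isSquare hν hab).mul (IsSquare.sq _)
  · refine mem_nonzeroSquares_iff.mpr ⟨by simp [hy, ha, hb, hc], ?_⟩
    exact ((IsSquare.sq y).mul (FiniteField.isSquare_mul_of_not_isSquare hab hbc)).mul
      (IsSquare.sq _)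
  · field_simp
    linear_combination a * hxy

theorem hasConsecWZS_prime (hp2 : p ≠ 2) (x : Fin 3 → ZMod p) :
    HasConsecWZS (nonzeroSquares p) x := by
  have one_mem : (1 : ZMod p) ∈ nonzeroSquares p :=
    mem_nonzeroSquares_iff.mpr ⟨one_ne_zero, IsSquare.one⟩
  by_cases hzero : ∃ i, x i = 0
  · obtain ⟨i, hi⟩ := hzero
    exact hasConsecWZS_of_mul_eq_zero i one_mem (by simp [hi])
  push Not at hzero
  have pair (i : Fin 2) (h : IsSquare (-(x i.castSucc * x i.succ))) :
      HasConsecWZS (nonzeroSquares p) x :=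
    hasConsecWZS_of_adjacent i (s := x i.succ ^ 2)
      (mem_nonzeroSquares_iff.mpr ⟨pow_ne_zero 2 (hzero _), IsSquare.sq _⟩)
      (mem_nonzeroSquares_iff.mpr ⟨neg_ne_zero.mpr (mul_ne_zero (hzero _) (hzero _)), h⟩)
      (by ring)
  by_cases h01 : IsSquare (-(x 0 * x 1))
  · exact pair 0 h01
  by_cases h12 : IsSquare (-(x 1 * x 2))
  · exact pair 1 h12
  obtain ⟨s, hs, t, ht, u, hu, h⟩ := exists_triple_weights_of_not_isSquare hp2
    (hzero 0) (hzero 1) (hzero 2) h01 h12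
  exact hasConsecWZS_of_triple hs ht hu h

-- The kernel of reduction mod `p` has odd order `p ^ (e - 1)`, so squaring is a bijection on it.
theorem isSquare_of_isSquare_unitsMap (hp2 : p ≠ 2) (he : e ≠ 0) {u : (ZMod (p ^ e))ˣ}
    (h : IsSquare (unitsMap (dvd_pow_self p he) u)) : IsSquare u := by
  have hp := Fact.out (p := p.Prime)
  set f := unitsMap (dvd_pow_self p he)
  have hf : Function.Surjective f := unitsMap_surjective _
  have hker : Nat.card f.ker = p ^ (e - 1) := by
    have hG : Nat.card (ZMod (p ^ e))ˣ = p ^ (e - 1) * (p - 1) := by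
      rw [Nat.card_eq_fintype_card, card_units_eq_totient,
        Nat.totient_prime_pow hp (Nat.pos_of_ne_zero he)]
    have hH : Nat.card (ZMod p)ˣ = p - 1 := by
      rw [Nat.card_eq_fintype_card, card_units_eq_totient, Nat.totient_prime hp]
    have h1 := f.ker.card_mul_index
    rw [Subgroup.index_ker, f.range_eq_top_of_surjective hf, Subgroup.card_top, hG, hH] at h1
    exact Nat.eq_of_mul_eq_mul_right (by have := hp.two_le; omega) h1
  have hcop : (Nat.card f.ker).Coprime 2 := by
    rw [hker, Nat.coprime_two_right]
    exact (hp.odd_of_ne_two hp2).pow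
  obtain ⟨v, hv⟩ := h
  obtain ⟨w, rfl⟩ := hf v
  have hk : u * (w * w)⁻¹ ∈ f.ker := by simp [hv]
  obtain ⟨z, hz⟩ := (powCoprime hcop).surjective ⟨_, hk⟩
  refine ⟨w * z, ?_⟩
  have hz' : (z : (ZMod (p ^ e))ˣ) ^ 2 = u * (w * w)⁻¹ := congrArg Subtype.val hz
  calc u = u * (w * w)⁻¹ * (w * w) := by group
    _ = w * z * (w * z) := by rw [← hz', sq]; ac_rfl

lemma isUnit_of_castHom_ne_zero (he : e ≠ 0) {z : ZMod (p ^ e)}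
    (h : castHom (dvd_pow_self p he) (ZMod p) z ≠ 0) : IsUnit z := by
  rw [← natCast_zmod_val z, isUnit_natCast_iff_not_dvd_pow Fact.out (Nat.pos_of_ne_zero he)]
  rwa [← natCast_zmod_val z, map_natCast, Ne, natCast_eq_zero_iff] at h

theorem mem_nonzeroSquares_of_castHom (hp2 : p ≠ 2) (he : e ≠ 0) {z : ZMod (p ^ e)}
    (h : castHom (dvd_pow_self p he) (ZMod p) z ∈ nonzeroSquares p) :
    z ∈ nonzeroSquares (p ^ e) := by
  obtain ⟨h0, hsq⟩ := mem_nonzeroSquares_iff.mp h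
  have hz := isUnit_of_castHom_ne_zero he h0
  refine mem_nonzeroSquares_iff.mpr ⟨fun h ↦ h0 (by simp [h]), ?_⟩
  obtain ⟨r, hr⟩ := isSquare_of_isSquare_unitsMap hp2 he (u := hz.unit) <| by
    obtain ⟨s, hs⟩ := hsq
    have hs0 : IsUnit s := isUnit_of_mul_isUnit_left (hs ▸ (hz.map _).ne_zero.isUnit)
    exact ⟨hs0.unit, Units.ext (by simpa [unitsMap_def] using hs)⟩
  exact ⟨r, by simpa using congrArg Units.val hr⟩

theorem hasConsecWZS_of_castHom (hp2 : p ≠ 2) (he : e ≠ 0) {k : ℕ} {x : Fin k → ZMod (p ^ e)}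
    (hx : ∀ t, IsUnit (x t))
    (h : HasConsecWZS (nonzeroSquares p) fun t ↦ castHom (dvd_pow_self p he) (ZMod p) (x t)) :
    HasConsecWZS (nonzeroSquares (p ^ e)) x := by
  obtain ⟨i, j, hij, w, hw, hsum⟩ := h
  obtain ⟨v, hv, hv0⟩ := exists_lift_of_sum_eq_zero _ (ringHom_surjective _)
    (mem_Icc.mpr ⟨le_rfl, hij⟩) (hx i) hsum
  exact ⟨i, j, hij, v, fun t ht ↦ mem_nonzeroSquares_of_castHom hp2 he (hv t ht ▸ hw t ht), hv0⟩

lemma prime_pow_pred_mul_eq_zero (he : e ≠ 0) {z : ZMod (p ^ e)} (hz : ¬IsUnit z) :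
    (p : ZMod (p ^ e)) ^ (e - 1) * z = 0 := by
  rw [← natCast_zmod_val z, isUnit_natCast_iff_not_dvd_pow Fact.out (Nat.pos_of_ne_zero he),
    not_not] at hz
  obtain ⟨m, hm⟩ := hz
  rw [← natCast_zmod_val z, hm, Nat.cast_mul, ← mul_assoc, ← pow_succ, Nat.sub_add_cancel
    (Nat.pos_of_ne_zero he), ← Nat.cast_pow, natCast_self, zero_mul]

lemma prime_pow_pred_mem_nonzeroSquares (he : Odd e) :
    (p : ZMod (p ^ e)) ^ (e - 1) ∈ nonzeroSquares (p ^ e) := by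
  obtain ⟨m, rfl⟩ := he
  refine mem_nonzeroSquares_iff.mpr ⟨?_, (p : ZMod (p ^ (2 * m + 1))) ^ m, ?_⟩
  · rw [← Nat.cast_pow, Ne, natCast_eq_zero_iff,
      Nat.pow_dvd_pow_iff_le_right (Fact.out (p := p.Prime)).one_lt]
    omega
  · rw [Nat.add_sub_cancel, ← pow_add, two_mul]

theorem hasConsecWZS_prime_pow (hp2 : p ≠ 2) (he : Odd e) (x : Fin 3 → ZMod (p ^ e)) :
    HasConsecWZS (nonzeroSquares (p ^ e)) x := by
  by_cases hx : ∀ t, IsUnit (x t)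
  · exact hasConsecWZS_of_castHom hp2 he.pos.ne' hx (hasConsecWZS_prime hp2 _)
  push Not at hx
  obtain ⟨t, ht⟩ := hx
  exact hasConsecWZS_of_mul_eq_zero t (prime_pow_pred_mem_nonzeroSquares he)
    (prime_pow_pred_mul_eq_zero he.pos.ne' ht)

theorem hasConsecWZS_of_chineseRemainder {a b k : ℕ} (hab : a.Coprime b)
    {x : Fin k → ZMod (a * b)}
    (h : HasConsecWZS (nonzeroSquares a) fun t ↦ (chineseRemainder hab (x t)).1) :
    HasConsecWZS (nonzeroSquares (a * b)) x := by
  set ψ := chineseRemainder hab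
  obtain ⟨i, j, hij, w, hw, hsum⟩ := h
  refine ⟨i, j, hij, fun t ↦ ψ.symm (w t, 0), fun t ht ↦ ?_, ψ.injective ?_⟩
  · obtain ⟨hw0, y, hy⟩ := hw t ht
    refine ⟨by simpa using hw0, ψ.symm (y, 0), ?_⟩
    rw [← map_pow, Prod.pow_mk, hy, zero_pow two_ne_zero]
  · simp only [map_sum, map_mul, RingEquiv.apply_symm_apply, map_zero]
    ext
    · simpa [Prod.fst_sum] using hsum
    · simp [Prod.snd_sum]

end ZMod

theorem hasConsecWZS_of_odd_factorization {n p : ℕ} (hp : p.Prime) (hp2 : p ≠ 2)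
    (hodd : Odd (n.factorization p)) (x : Fin 3 → ZMod n) :
    HasConsecWZS (nonzeroSquares n) x := by
  have hn : n ≠ 0 := by rintro rfl; simp at hodd
  have := Fact.mk hp
  have hco := (Nat.coprime_ordCompl hp hn).pow_left (n.factorization p)
  have hsplit := (Nat.ordProj_mul_ordCompl_eq_self n p).symm
  generalize n.factorization p = e, ordCompl[p] n = m at hodd hco hsplit
  subst hsplit
  exact ZMod.hasConsecWZS_of_chineseRemainder hco (ZMod.hasConsecWZS_prime_pow hp2 hodd _)

theorem Nat.exists_prime_ne_two_odd_factorization {n : ℕ} (hn : ¬IsSquare n)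
    (h2 : Even (n.factorization 2)) : ∃ p, p.Prime ∧ p ≠ 2 ∧ Odd (n.factorization p) := by
  by_contra! h
  have heven : ∀ p, Even (n.factorization p) := by
    intro p
    by_cases hp : p.Prime
    · obtain rfl | hp2 := eq_or_ne p 2
      · exact h2
      · exact Nat.not_odd_iff_even.mp (h p hp hp2)
    · simp [Nat.factorization_eq_zero_of_not_prime n hp]
  have hn0 : n ≠ 0 := by rintro rfl; exact hn ⟨0, rfl⟩
  refine hn ⟨n.factorization.prod fun p k ↦ p ^ (k / 2), ?_⟩
  conv_lhs => rw [← Nat.prod_factorization_pow_eq_self hn0]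
  rw [← Finsupp.prod_mul]
  refine Finsupp.prod_congr fun p _ ↦ ?_
  obtain ⟨r, hr⟩ := heven p
  rw [← pow_add, hr]
  congr 1
  omega

-- Over a field this says that `-c` is not a square.
def IsAnisotropicCoeff {R : Type*} [CommRing R] (c : R) : Prop :=
  ∀ x y : R, x ^ 2 + c * y ^ 2 = 0 → y ^ 2 = 0

namespace IsAnisotropicCoeff

variable {R S : Type*} [CommRing R] [CommRing S] {c : R}

lemma prod {d : S} (hc : IsAnisotropicCoeff c) (hd : IsAnisotropicCoeff d) :
    IsAnisotropicCoeff (c, d) := fun x y h ↦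
  Prod.ext (hc _ _ (by simpa using congrArg Prod.fst h))
    (hd _ _ (by simpa using congrArg Prod.snd h))

lemma map_ringEquiv (hc : IsAnisotropicCoeff c) (e : R ≃+* S) : IsAnisotropicCoeff (e c) :=
  fun x y h ↦ by
    simpa using congrArg e (hc (e.symm x) (e.symm y) (by simpa using congrArg e.symm h))

lemma eq_zero_of_add_mul_eq_zero (hc : IsAnisotropicCoeff c) {s t : R} (hs : IsSquare s)
    (ht : IsSquare t) (h : s + t * c = 0) : t = 0 := by
  obtain ⟨x, rfl⟩ := hs
  obtain ⟨y, rfl⟩ := ht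
  simpa [sq] using hc x y (by linear_combination h)

end IsAnisotropicCoeff

theorem Int.pow_dvd_sq_of_pow_dvd_sq_add_mul_sq {p c : ℤ} (hp : p ≠ 0)
    (hstep : ∀ W Y : ℤ, p ^ 2 ∣ W ^ 2 + c * Y ^ 2 → p ∣ W ∧ p ∣ Y) {r : ℕ}
    (hbase : ∀ W Y : ℤ, p ^ r ∣ W ^ 2 + c * Y ^ 2 → p ^ r ∣ Y ^ 2) (j : ℕ) {W Y : ℤ}
    (h : p ^ (r + 2 * j) ∣ W ^ 2 + c * Y ^ 2) : p ^ (r + 2 * j) ∣ Y ^ 2 := by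
  induction j generalizing W Y with
  | zero => exact hbase W Y h
  | succ j ih =>
    rw [show r + 2 * (j + 1) = r + 2 * j + 2 by ring, pow_add] at h ⊢
    obtain ⟨⟨W, rfl⟩, ⟨Y, rfl⟩⟩ := hstep _ _ (dvd_of_mul_left_dvd h)
    have hdesc : p ^ (r + 2 * j) * p ^ 2 ∣ (W ^ 2 + c * Y ^ 2) * p ^ 2 := by
      convert h using 1; ring
    rw [mul_pow, mul_comm (p ^ 2)]
    exact mul_dvd_mul_right (ih ((mul_dvd_mul_iff_right (pow_ne_zero 2 hp)).mp hdesc)) _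

lemma Int.dvd_and_dvd_of_sq_dvd_sq_add_self_mul_sq {p : ℤ} (hp : Prime p) {W Y : ℤ}
    (h : p ^ 2 ∣ W ^ 2 + p * Y ^ 2) : p ∣ W ∧ p ∣ Y := by
  have hW : p ∣ W := hp.dvd_of_dvd_pow <|
    (dvd_add_left (dvd_mul_right p _)).mp ((dvd_pow_self p two_ne_zero).trans h)
  have hY : p * p ∣ p * Y ^ 2 := by
    rw [← sq]; exact (dvd_add_right (pow_dvd_pow_of_dvd hW 2)).mp h
  exact ⟨hW, hp.dvd_of_dvd_pow ((mul_dvd_mul_iff_left hp.ne_zero).mp hY)⟩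

lemma Int.dvd_and_dvd_of_dvd_sq_add_mul_sq {p : ℕ} [Fact p.Prime] {c : ℤ}
    (hc : ¬IsSquare (-(c : ZMod p))) {W Y : ℤ} (h : (p : ℤ) ∣ W ^ 2 + c * Y ^ 2) :
    (p : ℤ) ∣ W ∧ (p : ℤ) ∣ Y := by
  simp only [← ZMod.intCast_zmod_eq_zero_iff_dvd] at h ⊢
  push_cast at h
  have hY : (Y : ZMod p) = 0 := by
    by_contra hY
    exact hc ⟨W / Y, by field_simp; linear_combination -h⟩
  exact ⟨pow_eq_zero_iff two_ne_zero |>.mp (by simpa [hY] using h), hY⟩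

namespace ZMod

lemma isAnisotropicCoeff_intCast {m : ℕ} {c : ℤ}
    (h : ∀ W Y : ℤ, (m : ℤ) ∣ W ^ 2 + c * Y ^ 2 → (m : ℤ) ∣ Y ^ 2) :
    IsAnisotropicCoeff (c : ZMod m) := by
  intro x y hxy
  obtain ⟨W, rfl⟩ := intCast_surjective x
  obtain ⟨Y, rfl⟩ := intCast_surjective y
  have := h W Y (by rw [← intCast_zmod_eq_zero_iff_dvd]; push_cast; exact hxy)
  rw [← intCast_zmod_eq_zero_iff_dvd] at this
  exact_mod_cast this

theorem exists_isAnisotropicCoeff_prime_pow {p k : ℕ} (hp : p.Prime) (h : Even k ∨ p ≠ 2) :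
    ∃ c : ZMod (p ^ k), IsAnisotropicCoeff c := by
  have hp0 : (p : ℤ) ≠ 0 := by exact_mod_cast hp.ne_zero
  by_cases hk : Even k
  · obtain ⟨j, rfl⟩ := hk
    refine ⟨(p : ℤ), isAnisotropicCoeff_intCast fun W Y hWY ↦ ?_⟩
    push_cast at hWY ⊢
    rw [← two_mul, ← zero_add (2 * j)] at hWY ⊢
    exact Int.pow_dvd_sq_of_pow_dvd_sq_add_mul_sq hp0
      (fun _ _ ↦ Int.dvd_and_dvd_of_sq_dvd_sq_add_self_mul_sq (Nat.prime_iff_prime_int.mp hp))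
      (by simp) j hWY
  · have := Fact.mk hp
    obtain ⟨ν, hν⟩ := FiniteField.exists_nonsquare (F := ZMod p)
      (by rw [ringChar_zmod_n]; exact h.resolve_left hk)
    obtain ⟨c, hc⟩ := intCast_surjective (-ν)
    have hstrong (W Y : ℤ) := Int.dvd_and_dvd_of_dvd_sq_add_mul_sq (W := W) (Y := Y)
      (c := c) (by rwa [hc, neg_neg])
    refine ⟨c, isAnisotropicCoeff_intCast fun W Y hWY ↦ ?_⟩
    push_cast at hWY ⊢
    rw [← Nat.div_add_mod k 2, Nat.odd_iff.mp (Nat.not_even_iff_odd.mp hk), add_comm] at hWY ⊢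
    exact Int.pow_dvd_sq_of_pow_dvd_sq_add_mul_sq hp0
      (fun W Y h ↦ hstrong W Y ((dvd_pow_self _ two_ne_zero).trans h))
      (fun W Y h ↦ by simpa using (hstrong W Y (by simpa using h)).2.pow two_ne_zero) _ hWY

end ZMod

lemma Nat.Coprime.even_factorization_two {a b : ℕ} (hab : a.Coprime b) (ha : a ≠ 0) (hb : b ≠ 0)
    (h : Even ((a * b).factorization 2)) : Even (a.factorization 2) ∧ Even (b.factorization 2) := by
  rw [Nat.factorization_mul ha hb, Finsupp.add_apply] at h
  have : a.factorization 2 = 0 ∨ b.factorization 2 = 0 := by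
    by_contra! h'
    exact Nat.not_coprime_of_dvd_of_dvd one_lt_two (Nat.dvd_of_factorization_pos h'.1)
      (Nat.dvd_of_factorization_pos h'.2) hab
  rcases this with h0 | h0 <;> simp_all

theorem ZMod.exists_isAnisotropicCoeff {n : ℕ} (h2 : Even (n.factorization 2)) :
    ∃ c : ZMod n, IsAnisotropicCoeff c := by
  induction n using Nat.recOnPosPrimePosCoprime with
  | prime_pow p k hp _ =>
    refine exists_isAnisotropicCoeff_prime_pow hp (or_iff_not_imp_right.mpr fun hp2 ↦ ?_)
    rw [not_not] at hp2
    rwa [hp.factorization_pow, hp2, Finsupp.single_eq_same] at h2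
  | zero =>
    refine ⟨_, isAnisotropicCoeff_intCast (c := 1) fun W Y h ↦ ?_⟩
    rw [Nat.cast_zero, zero_dvd_iff] at h ⊢
    nlinarith [sq_nonneg W, sq_nonneg Y]
  | one => exact ⟨0, fun _ _ _ ↦ Subsingleton.elim _ _⟩
  | coprime a b ha hb hab iha ihb =>
    obtain ⟨ha2, hb2⟩ := hab.even_factorization_two (by omega) (by omega) h2
    obtain ⟨c, hc⟩ := iha ha2
    obtain ⟨d, hd⟩ := ihb hb2
    exact ⟨_, (hc.prod hd).map_ringEquiv (chineseRemainder hab).symm⟩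

lemma not_hasWZSSubseq_one {n : ℕ} : ¬HasWZSSubseq (nonzeroSquares n) ![1] := by
  rintro ⟨I, hI, w, hw, hsum⟩
  obtain rfl : I = {0} := (by decide : ∀ I : Finset (Fin 1), I.Nonempty → I = {0}) I hI
  exact (hw 0 (mem_singleton_self 0)).1 (by simpa using hsum)

lemma IsAnisotropicCoeff.not_hasWZSSubseq {n : ℕ} {c : ZMod n} (hc : IsAnisotropicCoeff c) :
    ¬HasWZSSubseq (nonzeroSquares n) ![1, c] := by
  rintro ⟨I, hI, w, hw, hsum⟩
  have hw' : ∀ i ∈ I, w i ≠ 0 ∧ IsSquare (w i) := fun i hi ↦ mem_nonzeroSquares_iff.mp (hw i hi)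
  obtain rfl | rfl | rfl : I = {0} ∨ I = {1} ∨ I = {0, 1} :=
    (by decide : ∀ I : Finset (Fin 2), I.Nonempty → I = {0} ∨ I = {1} ∨ I = {0, 1}) I hI
  · exact (hw' 0 (by simp)).1 (by simpa using hsum)
  · exact (hw' 1 (by simp)).1 <|
      hc.eq_zero_of_add_mul_eq_zero IsSquare.zero (hw' 1 (by simp)).2 (by simpa using hsum)
  · exact (hw' 1 (by simp)).1 <|
      hc.eq_zero_of_add_mul_eq_zero (hw' 0 (by simp)).2 (hw' 1 (by simp)).2 (by simpa using hsum)

theorem three_le_of_dConst {n k : ℕ} (h2 : Even (n.factorization 2))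
    (hk : DConst n (nonzeroSquares n) k) : 3 ≤ k := by
  obtain ⟨hk0, hall⟩ := hk
  obtain ⟨c, hc⟩ := ZMod.exists_isAnisotropicCoeff h2
  by_contra! hk3
  interval_cases k
  · exact not_hasWZSSubseq_one (hall ![1])
  · exact hc.not_hasWZSSubseq (hall ![1, c])

theorem stmt16_general (n : ℕ) (hns : ¬ IsSquare n)
    (hv : Even (n.factorization 2)) :
    IsLeast {k | DConst n (nonzeroSquares n) k} 3 ∧
    IsLeast {k | CConst n (nonzeroSquares n) k} 3 := by
  obtain ⟨p, hp, hp2, hodd⟩ := Nat.exists_prime_ne_two_odd_factorization hns hv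
  have hC : CConst n (nonzeroSquares n) 3 :=
    ⟨three_pos, hasConsecWZS_of_odd_factorization hp hp2 hodd⟩
  exact ⟨⟨hC.dConst, fun _ ↦ three_le_of_dConst hv⟩,
    ⟨hC, fun _ hk ↦ three_le_of_dConst hv (CConst.dConst hk)⟩⟩

theorem stmt16 (n : ℕ) (hn : 0 < n) (hns : ¬ IsSquare n)
    (hv : Even (n.factorization 2)) :
    IsLeast {k | DConst n (nonzeroSquares n) k} 3 ∧
    IsLeast {k | CConst n (nonzeroSquares n) k} 3 :=
  stmt16_general n hns hv
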